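/- The square of the Kreweras complement ρ^2 acts on non-crossing partitions of [n] as the rotation i ↦ i+1 (mod n). -/
import Mathlib


/-- A set partition of `{1,…,n}` (as an equivalence relation on `Fin n`) is non-crossing. -/
def Noncross {n : ℕ} (s : Setoid (Fin n)) : Prop :=
  ∀ i j k l : Fin n, i < j → j < k → k < l → s i k → s j l → s i j

/-- Position of the unprimed point `i` in the interleaved (circular) order
`1', 1, 2', 2, …, n', n` of the `2n` points. -/
def posU {n : ℕ} (i : Fin n) : ℕ := 2 * i.val + 1

/-- Position of the primed point `i'` in the interleaved order (it lies between `i-1` and `i`). -/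
def posP {n : ℕ} (i : Fin n) : ℕ := 2 * i.val

/-- No chord of `π` (drawn on the unprimed points) crosses a chord of `σ`
(drawn on the primed points) in the interleaved circular order. -/
def NoMixedCross {n : ℕ} (π σ : Setoid (Fin n)) : Prop :=
  ∀ i k j l : Fin n, π i k → σ j l →
    ¬ (posU i < posP j ∧ posP j < posU k ∧ posU k < posP l) ∧
    ¬ (posP j < posU i ∧ posU i < posP l ∧ posP l < posU k)

/-- `σ` is the Kreweras complement of the non-crossing partition `π`: it is the coarsest
partition of the primed points which is non-crossing and whose chords do not cross those
of `π`; equivalently, its blocks are the sets of primed points lying in a common region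
of the picture of `π`. -/
def IsKrewerasCompl {n : ℕ} (π σ : Setoid (Fin n)) : Prop :=
  Noncross σ ∧ NoMixedCross π σ ∧
    ∀ σ' : Setoid (Fin n), Noncross σ' → NoMixedCross π σ' → σ' ≤ σ

/-! ### Auxiliary development -/

/-- Crossing of chord `{a,b}` with chord `{c,d}` on the circle of `2n` points, in linear
coordinates: exactly one of `c, d` lies strictly between `min a b` and `max a b`. -/
def Cr (a b c d : ℕ) : Prop :=
  ¬ ((min a b < c ∧ c < max a b) ↔ (min a b < d ∧ d < max a b))

lemma Cr.swap {a b c d : ℕ} (ha : a % 2 = 1) (hb : b % 2 = 1) (hc : c % 2 = 0) (hd : d % 2 = 0)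
    (h : Cr a b c d) : Cr c d a b := by unfold Cr at *; omega

/-- The Kreweras complement, defined explicitly: `j ~ l` iff no chord of `π` separates the
primed points `j'` and `l'`. -/
def kc {n : ℕ} (π : Setoid (Fin n)) : Setoid (Fin n) where
  r j l := ∀ i k : Fin n, π i k → ¬ Cr (posU i) (posU k) (posP j) (posP l)
  iseqv := by
    constructor
    · intro j i k _; unfold Cr posU posP; omega
    · intro j l h i k hik
      have := h i k hik; unfold Cr posU posP at *; omega
    · intro j l m h1 h2 i k hik
      have := h1 i k hik; have := h2 i k hik; unfold Cr posU posP at *; omega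

lemma noMixedCross_iff {n : ℕ} (π σ : Setoid (Fin n)) :
    NoMixedCross π σ ↔ ∀ j l, σ j l → ∀ i k, π i k → ¬ Cr (posU i) (posU k) (posP j) (posP l) := by
  constructor
  · intro H j l hjl i k hik hcr
    have h1 := H i k j l hik hjl
    have h2 := H k i j l (π.symm hik) hjl
    have h3 := H i k l j hik (σ.symm hjl)
    have h4 := H k i l j (π.symm hik) (σ.symm hjl)
    unfold Cr posU posP at *; omega
  · intro H i k j l hik hjl
    have := H j l hjl i k hik
    unfold Cr posU posP at *; omega

lemma noncross_kc {n : ℕ} (π : Setoid (Fin n)) : Noncross (kc π) := by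
  intro i j k l hij hjk hkl hik hjl u v huv
  have h1 := hik u v huv
  have h2 := hjl u v huv
  have h3 : i.val < j.val := hij
  have h4 : j.val < k.val := hjk
  have h5 : k.val < l.val := hkl
  unfold Cr posU posP at h1 h2 ⊢; omega

lemma noMixedCross_kc {n : ℕ} (π : Setoid (Fin n)) : NoMixedCross π (kc π) :=
  (noMixedCross_iff π (kc π)).2 (fun _ _ h => h)

lemma le_kc {n : ℕ} (π σ' : Setoid (Fin n)) (h : NoMixedCross π σ') : σ' ≤ kc π := by
  rw [Setoid.le_def]
  intro x y hxy
  exact ((noMixedCross_iff π σ').1 h) x y hxy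

/-- Any map `ρ` satisfying the universal property agrees pointwise with `kc`. -/
lemma rho_eq {n : ℕ} (ρ : Setoid (Fin n) → Setoid (Fin n))
    (hρ : ∀ π, Noncross π → IsKrewerasCompl π (ρ π)) (π : Setoid (Fin n)) (hπ : Noncross π) :
    ∀ j l, (ρ π) j l ↔ (kc π) j l := by
  obtain ⟨h1, h2, h3⟩ := hρ π hπ
  intro j l
  constructor
  · intro h; exact le_kc π (ρ π) h2 h
  · intro h; exact h3 (kc π) (noncross_kc π) (noMixedCross_kc π) h

lemma kc_congr {n : ℕ} {π₁ π₂ : Setoid (Fin n)} (h : ∀ a b, π₁ a b ↔ π₂ a b) (x y : Fin n) :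
    (kc π₁) x y ↔ (kc π₂) x y :=
  ⟨fun H i k hik => H i k ((h i k).2 hik), fun H i k hik => H i k ((h i k).1 hik)⟩

lemma addmod {n t s : ℕ} (h1 : t < n) (h2 : s < n) :
    (t + s) % n = t + s ∨ (t + s) % n + n = t + s := by
  rcases Nat.lt_or_ge (t + s) n with h | h
  · left; exact Nat.mod_eq_of_lt h
  · right
    have h3 : (t + s) % n = (t + s - n) % n := by
      conv_lhs => rw [Nat.mod_eq_sub_mod h]
    rw [h3, Nat.mod_eq_of_lt (by omega)]
    omega

lemma addval {n : ℕ} [NeZero n] (f g : Fin n) :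
    (f + g).val = f.val + g.val ∨ (f + g).val + n = f.val + g.val := by
  rw [Fin.add_def]
  exact addmod f.isLt g.isLt

lemma ord4 {n I J K L E I' J' K' L' : ℕ} (hI : I < n) (hJ : J < n) (hK : K < n) (hL : L < n)
    (hE : E < n) (hI' : I' < n) (hJ' : J' < n) (hK' : K' < n) (hL' : L' < n)
    (lI : I' = I + E ∨ I' + n = I + E) (lJ : J' = J + E ∨ J' + n = J + E)
    (lK : K' = K + E ∨ K' + n = K + E) (lL : L' = L + E ∨ L' + n = L + E)
    (hIJ : I < J) (hJK : J < K) (hKL : K < L) :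
    (I' < J' ∧ J' < K' ∧ K' < L') ∨ (L' < I' ∧ I' < J' ∧ J' < K') ∨
    (K' < L' ∧ L' < I' ∧ I' < J') ∨ (J' < K' ∧ K' < L' ∧ L' < I') := by omega

/-- Rotation preserves noncrossing. -/
lemma noncross_comap {n : ℕ} [NeZero n] {π : Setoid (Fin n)} (hπ : Noncross π) (e : Fin n) :
    Noncross (Setoid.comap (· + e) π) := by
  intro i j k l hij hjk hkl hik hjl
  simp only [Setoid.comap_rel] at *
  have hIJ : i.val < j.val := hij
  have hJK : j.val < k.val := hjk
  have hKL : k.val < l.val := hkl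
  have hord : (i + e < j + e ∧ j + e < k + e ∧ k + e < l + e) ∨
      (l + e < i + e ∧ i + e < j + e ∧ j + e < k + e) ∨
      (k + e < l + e ∧ l + e < i + e ∧ i + e < j + e) ∨
      (j + e < k + e ∧ k + e < l + e ∧ l + e < i + e) := by
    simp only [Fin.lt_def]
    exact ord4 i.isLt j.isLt k.isLt l.isLt e.isLt (i+e).isLt (j+e).isLt (k+e).isLt (l+e).isLt
      (addval i e) (addval j e) (addval k e) (addval l e) hIJ hJK hKL
  rcases hord with ⟨h1, h2, h3⟩ | ⟨h1, h2, h3⟩ | ⟨h1, h2, h3⟩ | ⟨h1, h2, h3⟩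
  · exact hπ _ _ _ _ h1 h2 h3 hik hjl
  · have h4 : π (l + e) (j + e) := π.symm hjl
    have h5 : π (l + e) (i + e) := hπ _ _ _ _ h1 h2 h3 h4 hik
    exact π.trans (π.symm h5) h4
  · have h4 : π (k + e) (i + e) := π.symm hik
    have h5 : π (l + e) (j + e) := π.symm hjl
    have h6 : π (k + e) (l + e) := hπ _ _ _ _ h1 h2 h3 h4 h5
    have h7 : π (i + e) (l + e) := π.trans hik h6
    exact π.trans h7 h5
  · have h4 : π (k + e) (i + e) := π.symm hik
    have h5 : π (j + e) (k + e) := hπ _ _ _ _ h1 h2 h3 hjl h4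
    exact π.trans hik (π.symm h5)

/-- A point related to a point in the interval `[d', c']` of the block is either related
to the block endpoints or itself in the interval. -/
lemma block_interval {n : ℕ} {τ : Setoid (Fin n)} (hτ : Noncross τ) {d' c' M N : Fin n}
    (h1 : τ d' c') (hMN : τ M N) (hN1 : d' ≤ N) (hN2 : N ≤ c') :
    τ d' M ∨ τ c' M ∨ (d' ≤ M ∧ M ≤ c') := by
  rcases eq_or_lt_of_le hN1 with rfl | hN1'
  · left; exact τ.symm hMN
  rcases eq_or_lt_of_le hN2 with rfl | hN2'
  · right; left; exact τ.symm hMN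
  rcases lt_trichotomy M d' with hM | hM | hM
  · left; exact τ.symm (hτ M d' N c' hM hN1' hN2' hMN h1)
  · left; subst hM; exact τ.refl _
  rcases lt_trichotomy M c' with hM2 | hM2 | hM2
  · right; right; exact ⟨le_of_lt hM, le_of_lt hM2⟩
  · right; left; subst hM2; exact τ.refl _
  · have h2 : τ d' N := hτ d' N c' M hN1' hN2' hM2 h1 (τ.symm hMN)
    have h3 : τ N c' := τ.trans (τ.symm h2) h1
    right; left; exact τ.trans (τ.symm h3) (τ.symm hMN)

lemma crdown {n J L X Y A B : ℕ} (hJ : J < n) (hL : L < n) (hX : X < n) (hY : Y < n)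
    (hA : A < n) (hB : B < n)
    (lA : A + 1 = X ∨ A + 1 = X + n) (lB : B + 1 = Y ∨ B + 1 = Y + n)
    (h : Cr (2*J+1) (2*L+1) (2*X) (2*Y)) : Cr (2*A+1) (2*B+1) (2*J) (2*L) := by
  unfold Cr at *; omega

lemma stepA {n C D E J L M N U V : ℕ} (hC : C + 1 < n) (hDC : D ≤ C) (hE : E < n)
    (hJ : J < n) (hL : L < n) (hM : M < n) (hN : N < n) (hU : U < n) (hV : V < n)
    (lJ : C + E + 1 = J ∨ C + E + 1 = J + n ∨ C + E + 1 = J + 2*n)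
    (lL : D + E = L ∨ D + E = L + n)
    (lM : M + E = U ∨ M + E = U + n) (lN : N + E = V ∨ N + E = V + n)
    (hcr : Cr (2*J) (2*L) (2*U+1) (2*V+1)) :
    ((D ≤ M ∧ M ≤ C) ∧ ¬(D ≤ N ∧ N ≤ C)) ∨ (¬(D ≤ M ∧ M ≤ C) ∧ (D ≤ N ∧ N ≤ C)) := by
  unfold Cr at *; omega

lemma finalCr {n C D E A X J L Av : ℕ} (hC : C + 1 < n) (hDC : D ≤ C) (hAD : D ≤ A) (hAC : A ≤ C)
    (hE : E < n) (hX : X < n) (hJ : J < n) (hL : L < n) (hAv : Av < n)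
    (lJ : C + E + 1 = J ∨ C + E + 1 = J + n ∨ C + E + 1 = J + 2*n)
    (lL : D + E = L ∨ D + E = L + n)
    (lA : A + E = Av ∨ A + E = Av + n)
    (lX : Av + 1 = X ∨ Av + 1 = X + n) :
    Cr (2*J+1) (2*L+1) (2*X) (2*E) := by
  unfold Cr; omega

/-- The key combinatorial statement: `kc ∘ kc` is the rotation. -/
lemma kc_sq {n : ℕ} [NeZero n] {π : Setoid (Fin n)} (hπ : Noncross π) (x y : Fin n) :
    (kc (kc π)) x y ↔ π (x - 1) (y - 1) := by
  classical
  rcases Nat.lt_or_ge n 2 with hn | hn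
  · have hn1 : n = 1 := by have := Nat.pos_of_ne_zero (NeZero.ne n); omega
    have hx : x = y := by subst hn1; exact Subsingleton.elim x y
    subst hx
    constructor
    · intro _; exact π.refl _
    · intro _; exact (kc (kc π)).refl x
  · have h1n : (1 : Fin n).val = 1 := by rw [Fin.val_one']; exact Nat.mod_eq_of_lt hn
    constructor
    · -- hard direction
      intro H
      by_contra hab
      -- the block of `a := x - 1`, in coordinates shifted by `y`
      set T : Finset (Fin n) := Finset.univ.filter (fun t => π (x - 1) (t + y)) with hT
      have hTa : (x - 1 - y) ∈ T := by
        rw [hT, Finset.mem_filter]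
        refine ⟨Finset.mem_univ _, ?_⟩
        have h0 : x - 1 - y + y = x - 1 := sub_add_cancel _ _
        rw [h0]
      have hTne : T.Nonempty := ⟨_, hTa⟩
      set c' := T.max' hTne with hc'
      set d' := T.min' hTne with hd'
      have hπc : π (x - 1) (c' + y) := (Finset.mem_filter.1 (T.max'_mem hTne)).2
      have hπd : π (x - 1) (d' + y) := (Finset.mem_filter.1 (T.min'_mem hTne)).2
      have gap : ∀ t : Fin n, π (x - 1) (t + y) → d' ≤ t ∧ t ≤ c' := by
        intro t ht
        have htT : t ∈ T := by rw [hT, Finset.mem_filter]; exact ⟨Finset.mem_univ _, ht⟩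
        exact ⟨T.min'_le t htT, T.le_max' t htT⟩
      have hDC : d'.val ≤ c'.val := T.min'_le c' (T.max'_mem hTne)
      -- c' is not the last element (position n-1 is occupied by b = y - 1 ∉ block)
      have hC : c'.val + 1 < n := by
        by_contra hcc
        push_neg at hcc
        have h2 := addval c' y
        have h3 := addval (y - 1) (1 : Fin n)
        rw [sub_add_cancel, h1n] at h3
        have hcb : c' + y = y - 1 := by
          apply Fin.ext
          obtain ⟨A, hA⟩ : ∃ A, (c' + y).val = A := ⟨_, rfl⟩
          obtain ⟨B, hB⟩ : ∃ B, (y - 1).val = B := ⟨_, rfl⟩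
          have hAn : A < n := hA ▸ (c' + y).isLt
          have hBn : B < n := hB ▸ (y - 1).isLt
          rw [hA] at h2 ⊢
          rw [hB] at h3 ⊢
          have := c'.isLt; have := y.isLt
          omega
        exact hab (hcb ▸ hπc)
      -- links for omega
      have lJ : c'.val + y.val + 1 = (c' + y + 1).val ∨
          c'.val + y.val + 1 = (c' + y + 1).val + n ∨
          c'.val + y.val + 1 = (c' + y + 1).val + 2*n := by
        have q1 := addval (c' + y) (1 : Fin n)
        rw [h1n] at q1
        have q2 := addval c' y
        omega
      have lL : d'.val + y.val = (d' + y).val ∨ d'.val + y.val = (d' + y).val + n := by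
        have := addval d' y; omega
      -- the pair (c' + y + 1, d' + y) is related in kc π
      have hkc : (kc π) (c' + y + 1) (d' + y) := by
        intro u v huv hcr
        have hcr2 : Cr (posP (c' + y + 1)) (posP (d' + y)) (posU u) (posU v) := by
          refine Cr.swap ?_ ?_ ?_ ?_ hcr <;> simp only [posU, posP] <;> omega
        unfold posU posP at hcr2
        have lM : (u - y).val + y.val = u.val ∨ (u - y).val + y.val = u.val + n := by
          have := addval (u - y) y; rw [sub_add_cancel] at this; omega
        have lN : (v - y).val + y.val = v.val ∨ (v - y).val + y.val = v.val + n := by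
          have := addval (v - y) y; rw [sub_add_cancel] at this; omega
        have hstep := stepA hC hDC y.isLt (c' + y + 1).isLt (d' + y).isLt
          (u - y).isLt (v - y).isLt u.isLt v.isLt lJ lL lM lN hcr2
        have hτ := noncross_comap hπ y
        have hdc : (Setoid.comap (· + y) π) d' c' :=
          (Setoid.comap_rel (· + y) π d' c').2 (π.trans (π.symm hπd) hπc)
        have hτuv : (Setoid.comap (· + y) π) (u - y) (v - y) := by
          refine (Setoid.comap_rel (· + y) π (u - y) (v - y)).2 ?_
          show π (u - y + y) (v - y + y)
          rw [sub_add_cancel, sub_add_cancel]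
          exact huv
        rcases hstep with ⟨hMin, hNout⟩ | ⟨hMout, hNin⟩
        · have h5 := block_interval hτ hdc ((Setoid.comap (· + y) π).symm hτuv)
            (Fin.le_def.2 hMin.1) (Fin.le_def.2 hMin.2)
          rcases h5 with h6 | h6 | h6
          · have h9 : π (d' + y) (v - y + y) := (Setoid.comap_rel (· + y) π _ _).1 h6
            have hg := gap (v - y) (π.trans hπd h9)
            exact hNout ⟨Fin.le_def.1 hg.1, Fin.le_def.1 hg.2⟩
          · have h9 : π (c' + y) (v - y + y) := (Setoid.comap_rel (· + y) π _ _).1 h6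
            have hg := gap (v - y) (π.trans hπc h9)
            exact hNout ⟨Fin.le_def.1 hg.1, Fin.le_def.1 hg.2⟩
          · exact hNout ⟨Fin.le_def.1 h6.1, Fin.le_def.1 h6.2⟩
        · have h5 := block_interval hτ hdc hτuv
            (Fin.le_def.2 hNin.1) (Fin.le_def.2 hNin.2)
          rcases h5 with h6 | h6 | h6
          · have h9 : π (d' + y) (u - y + y) := (Setoid.comap_rel (· + y) π _ _).1 h6
            have hg := gap (u - y) (π.trans hπd h9)
            exact hMout ⟨Fin.le_def.1 hg.1, Fin.le_def.1 hg.2⟩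
          · have h9 : π (c' + y) (u - y + y) := (Setoid.comap_rel (· + y) π _ _).1 h6
            have hg := gap (u - y) (π.trans hπc h9)
            exact hMout ⟨Fin.le_def.1 hg.1, Fin.le_def.1 hg.2⟩
          · exact hMout ⟨Fin.le_def.1 h6.1, Fin.le_def.1 h6.2⟩
      -- the chord (c'+y+1, d'+y) crosses the chord (x, y) of the primed points
      have hg := gap (x - 1 - y) (by have h0 : x - 1 - y + y = x - 1 := sub_add_cancel _ _; rw [h0])
      have lA : (x - 1 - y).val + y.val = (x - 1).val ∨
          (x - 1 - y).val + y.val = (x - 1).val + n := by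
        have := addval (x - 1 - y) y; rw [sub_add_cancel] at this; omega
      have lX : (x - 1).val + 1 = x.val ∨ (x - 1).val + 1 = x.val + n := by
        have := addval (x - 1) (1 : Fin n)
        rw [sub_add_cancel, h1n] at this
        omega
      have hfinal : Cr (posU (c' + y + 1)) (posU (d' + y)) (posP x) (posP y) := by
        unfold posU posP
        exact finalCr hC hDC (Fin.le_def.1 hg.1) (Fin.le_def.1 hg.2) y.isLt x.isLt
          (c' + y + 1).isLt (d' + y).isLt (x - 1).isLt lJ lL lA lX
      exact H (c' + y + 1) (d' + y) hkc hfinal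
    · -- easy direction
      intro h j l hjl hcr
      have hne := hjl (x - 1) (y - 1) h
      apply hne
      have lA : (x - 1).val + 1 = x.val ∨ (x - 1).val + 1 = x.val + n := by
        have := addval (x - 1) (1 : Fin n)
        rw [sub_add_cancel, h1n] at this
        omega
      have lB : (y - 1).val + 1 = y.val ∨ (y - 1).val + 1 = y.val + n := by
        have := addval (y - 1) (1 : Fin n)
        rw [sub_add_cancel, h1n] at this
        omega
      unfold posU posP at hcr ⊢
      exact crdown j.isLt l.isLt x.isLt y.isLt (x - 1).isLt (y - 1).isLt lA lB hcr

/-- The square of the Kreweras complement acts on non-crossing partitions of `[n]` as the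
rotation `i ↦ i + 1 (mod n)`: `x` and `y` are related in `ρ²(π)` iff `x - 1` and `y - 1`
are related in `π`. -/
theorem krewerasCompl_sq_eq_rotation (n : ℕ) [NeZero n]
    (ρ : Setoid (Fin n) → Setoid (Fin n))
    (hρ : ∀ π, Noncross π → IsKrewerasCompl π (ρ π)) :
    ∀ π, Noncross π → ∀ x y : Fin n, (ρ (ρ π)) x y ↔ π (x - 1) (y - 1) := by
  intro π hπ x y
  have h1 : Noncross (ρ π) := (hρ π hπ).1
  have e1 : (ρ (ρ π)) x y ↔ (kc (ρ π)) x y := rho_eq ρ hρ (ρ π) h1 x y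
  have e2 : (kc (ρ π)) x y ↔ (kc (kc π)) x y := kc_congr (rho_eq ρ hρ π hπ) x y
  exact e1.trans (e2.trans (kc_sq hπ x y))
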